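/- Let R be a local ring whose maximal ideal M is principal, let I be a proper ideal of R, and assume √I ⊆ δ(I). Then I is a 1-absorbing δ-primary ideal of R if and only if I is a δ-primary ideal of R. -/

import Mathlib

open Ideal

/-- `δ` is an expansion function of the ideals of `R`. -/
def ExpansionFunction (R : Type*) [CommRing R] (δ : Ideal R → Ideal R) : Prop :=
  (∀ I : Ideal R, I ≤ δ I) ∧ ∀ I J : Ideal R, J ≤ I → δ J ≤ δ I

/-- A proper ideal `I` of `R` is 1-absorbing δ-primary if whenever nonunit elements
`a, b, c` satisfy `a * b * c ∈ I`, then `a * b ∈ I` or `c ∈ δ I`. -/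
def IsOneAbsDeltaPrimary {R : Type*} [CommRing R] (δ : Ideal R → Ideal R) (I : Ideal R) : Prop :=
  I ≠ ⊤ ∧ ∀ a b c : R, ¬ IsUnit a → ¬ IsUnit b → ¬ IsUnit c →
    a * b * c ∈ I → a * b ∈ I ∨ c ∈ δ I

/-- A proper ideal `I` of `R` is δ-primary if whenever `a * b ∈ I`,
then `a ∈ I` or `b ∈ δ I`. -/
def IsDeltaPrimary {R : Type*} [CommRing R] (δ : Ideal R → Ideal R) (I : Ideal R) : Prop :=
  I ≠ ⊤ ∧ ∀ a b : R, a * b ∈ I → a ∈ I ∨ b ∈ δ I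

/-- A proper ideal `I` of `R` is δ-semiprimary if whenever `a * b ∈ I`,
then `a ∈ δ I` or `b ∈ δ I`. -/
def IsDeltaSemiprimary {R : Type*} [CommRing R] (δ : Ideal R → Ideal R) (I : Ideal R) : Prop :=
  I ≠ ⊤ ∧ ∀ a b : R, a * b ∈ I → a ∈ δ I ∨ b ∈ δ I

/-- A proper ideal `I` of `R` is 1-absorbing prime if whenever nonunit elements
`a, b, c` satisfy `a * b * c ∈ I`, then `a * b ∈ I` or `c ∈ I`. -/
def IsOneAbsPrime {R : Type*} [CommRing R] (I : Ideal R) : Prop :=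
  I ≠ ⊤ ∧ ∀ a b c : R, ¬ IsUnit a → ¬ IsUnit b → ¬ IsUnit c →
    a * b * c ∈ I → a * b ∈ I ∨ c ∈ I

/-!
If `M = (p)` and `a ∉ I`, `a * b ∈ I`, then either `a = p * a₁` with `a₁` a nonunit, and the
1-absorbing condition applied to `p * a₁ * b` gives `b ∈ δ I`; or `a` itself generates `M`, so
`b = a * t` and the condition applied to `a * a * t` gives `t ∈ δ I` (whence `b ∈ δ I`) or
`a * a ∈ I`, in which case `b ^ 2 ∈ I` and `b ∈ √I ⊆ δ I`.
-/

theorem IsLocalRing.exists_nonunits_mul_eq_or_maximalIdeal_eq_span {R : Type*} [CommRing R]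
    [IsLocalRing R] (hprin : (IsLocalRing.maximalIdeal R).IsPrincipal) {a : R}
    (ha : ¬IsUnit a) :
    (∃ x y : R, ¬IsUnit x ∧ ¬IsUnit y ∧ x * y = a) ∨ IsLocalRing.maximalIdeal R = span {a} := by
  obtain ⟨p, hp⟩ := hprin
  rw [Ideal.submodule_span_eq] at hp
  have hpM : p ∈ IsLocalRing.maximalIdeal R := hp ▸ mem_span_singleton_self p
  obtain ⟨a₁, rfl⟩ := mem_span_singleton.mp (hp ▸ (IsLocalRing.mem_maximalIdeal a).mpr ha)
  by_cases ha₁ : IsUnit a₁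
  · exact Or.inr (by rw [hp, span_singleton_mul_right_unit ha₁])
  · exact Or.inl ⟨p, a₁, hpM, ha₁, rfl⟩

section OneAbsDeltaPrimary

variable {R : Type*} [CommRing R] {δ : Ideal R → Ideal R} {I : Ideal R}

theorem IsDeltaPrimary.isOneAbsDeltaPrimary (h : IsDeltaPrimary δ I) :
    IsOneAbsDeltaPrimary δ I :=
  ⟨h.1, fun a b c _ _ _ habc => h.2 (a * b) c habc⟩

theorem IsOneAbsDeltaPrimary.mul_mem_or_mem (h : IsOneAbsDeltaPrimary δ I) {x y c : R}
    (hx : ¬IsUnit x) (hy : ¬IsUnit y) (hxyc : x * y * c ∈ I) : x * y ∈ I ∨ c ∈ δ I := by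
  by_cases hc : IsUnit c
  · exact Or.inl ((I.mul_unit_mem_iff_mem hc).mp hxyc)
  · exact h.2 x y c hx hy hc hxyc

theorem IsOneAbsDeltaPrimary.mem_of_mul_mem_of_dvd (h : IsOneAbsDeltaPrimary δ I)
    (hrad : I.radical ≤ δ I) {a b : R} (ha : ¬IsUnit a) (hab : a * b ∈ I) (hdvd : a ∣ b) :
    b ∈ δ I := by
  obtain ⟨t, rfl⟩ := hdvd
  rcases h.mul_mem_or_mem ha ha (by rwa [← mul_assoc] at hab) with haa | ht
  · have hsq : (a * t) ^ 2 ∈ I := by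
      rw [show (a * t) ^ 2 = a * a * (t * t) by ring]
      exact I.mul_mem_right _ haa
    exact hrad ⟨2, hsq⟩
  · exact (δ I).mul_mem_left a ht

end OneAbsDeltaPrimary

theorem local_principal_max_radical_le_one_abs_iff_delta_primary_general
    {R : Type*} [CommRing R] [IsLocalRing R]
    (hprin : (IsLocalRing.maximalIdeal R).IsPrincipal)
    (δ : Ideal R → Ideal R)
    (I : Ideal R) (hrad : I.radical ≤ δ I) :
    IsOneAbsDeltaPrimary δ I ↔ IsDeltaPrimary δ I := by
  refine ⟨fun h => ⟨h.1, fun a b hab => or_iff_not_imp_left.mpr fun haI => ?_⟩,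
    IsDeltaPrimary.isOneAbsDeltaPrimary⟩
  by_cases ha : IsUnit a
  · exact hrad (le_radical ((I.unit_mul_mem_iff_mem ha).mp hab))
  rcases IsLocalRing.exists_nonunits_mul_eq_or_maximalIdeal_eq_span hprin ha with
    ⟨x, y, hx, hy, rfl⟩ | hspan
  · exact (h.mul_mem_or_mem hx hy hab).resolve_left haI
  · by_cases hb : IsUnit b
    · exact absurd ((I.mul_unit_mem_iff_mem hb).mp hab) haI
    have hbM : b ∈ IsLocalRing.maximalIdeal R := (IsLocalRing.mem_maximalIdeal b).mpr hb
    exact h.mem_of_mul_mem_of_dvd hrad ha hab (mem_span_singleton.mp (hspan ▸ hbM))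

theorem local_principal_max_radical_le_one_abs_iff_delta_primary
    {R : Type*} [CommRing R] [IsLocalRing R]
    (hprin : (IsLocalRing.maximalIdeal R).IsPrincipal)
    (δ : Ideal R → Ideal R) (hδ : ExpansionFunction R δ)
    (I : Ideal R) (hIproper : I ≠ ⊤) (hrad : I.radical ≤ δ I) :
    IsOneAbsDeltaPrimary δ I ↔ IsDeltaPrimary δ I :=
  local_principal_max_radical_le_one_abs_iff_delta_primary_general hprin δ I hrad
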